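/- The formula A.[x,y:r] := [dx - cy, ay - bx : r] defines a left action of SL(2,Z) on the integral Heisenberg group H(L) by group automorphisms. -/

import Mathlib

/-- The multiplication of the integral Heisenberg group on triples `[x,y:r]`:
`[x,y:r]·[x',y':r'] = [x+x', y+y', r+r'+½((x,y')-(x',y))]`. -/
noncomputable def heisMul {V : Type*} [AddCommGroup V] [Module ℝ V]
    (B : V →ₗ[ℝ] V →ₗ[ℝ] ℝ) (p q : V × V × ℝ) : V × V × ℝ :=
  (p.1 + q.1, p.2.1 + q.2.1, p.2.2 + q.2.2 + (B p.1 q.2.1 - B q.1 p.2.1) / 2)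

/-- The `SL(2,ℤ)`-action `A.[x,y:r] = [dx - cy, ay - bx : r]` for `A = (a b; c d)`. -/
def slAct {V : Type*} [AddCommGroup V] [Module ℝ V]
    (a b c d : ℤ) (p : V × V × ℝ) : V × V × ℝ :=
  (d • p.1 - c • p.2.1, a • p.2.1 - b • p.1, p.2.2)

/-! The action fixes the centre and acts on `(x, y)` by a linear substitution, so the action laws
are matrix identities. For a symmetric form, the cocycle `(x,y') - (x',y)` of two points is
multiplied by `det A = 1`, so each `A` is an automorphism. On `H(L)`, using `ad = 1 + bc`,
the term `½(x,y)` changes by `bc·½((x,y) + (y,x)) - bd·½(x,x) - ac·½(y,y)`, which is an integer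
because the form is even on `L` (for the mixed term, polarize at `x + y`). -/

section
variable {V : Type*} [AddCommGroup V] [Module ℝ V]

theorem slAct_one_zero_zero_one (p : V × V × ℝ) : slAct 1 0 0 1 p = p := by
  simp [slAct]

theorem slAct_mul (a b c d a' b' c' d' : ℤ) (p : V × V × ℝ) :
    slAct (a * a' + b * c') (a * b' + b * d') (c * a' + d * c') (c * b' + d * d') p =
      slAct a b c d (slAct a' b' c' d' p) := by
  simp only [slAct, Prod.mk.injEq]
  exact ⟨by module, by module, trivial⟩

variable (B : V →ₗ[ℝ] V →ₗ[ℝ] ℝ)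

theorem LinearMap.map_zsmul_zsmul₂ (m n : ℤ) (u w : V) :
    B (m • u) (n • w) = m * n * B u w := by
  simp only [← Int.cast_smul_eq_zsmul ℝ, map_smul, LinearMap.smul_apply, smul_eq_mul]
  ring

theorem bilin_slAct_skew_eq_det_mul (hB : ∀ u w : V, B u w = B w u) (a b c d : ℤ) (x y x' y' : V) :
    B (d • x - c • y) (a • y' - b • x') - B (d • x' - c • y') (a • y - b • x) =
      (a * d - b * c) * (B x y' - B x' y) := by
  simp only [map_sub, LinearMap.sub_apply, LinearMap.map_zsmul_zsmul₂]
  rw [hB x' x, hB y' y, hB y x', hB y' x]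
  ring

theorem slAct_heisMul (hB : ∀ u w : V, B u w = B w u) {a b c d : ℤ} (hdet : a * d - b * c = 1)
    (p q : V × V × ℝ) :
    slAct a b c d (heisMul B p q) = heisMul B (slAct a b c d p) (slAct a b c d q) := by
  have hdetℝ : (a * d - b * c : ℝ) = 1 := by exact_mod_cast hdet
  simp only [slAct, heisMul, Prod.mk.injEq, bilin_slAct_skew_eq_det_mul B hB, hdetℝ, one_mul]
  exact ⟨by module, by module, trivial⟩

theorem bilin_slAct_fst_snd {a b c d : ℤ} (hdet : a * d - b * c = 1) (x y : V) :
    B (d • x - c • y) (a • y - b • x) =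
      B x y + b * c * (B x y + B y x) - d * b * B x x - c * a * B y y := by
  have hdetℝ : (a * d - b * c : ℝ) = 1 := by exact_mod_cast hdet
  simp only [map_sub, LinearMap.sub_apply, LinearMap.map_zsmul_zsmul₂]
  linear_combination B x y * hdetℝ

theorem exists_int_bilin_add_swap {L : Submodule ℤ V}
    (heven : ∀ u ∈ L, ∃ n : ℤ, B u u = 2 * (n : ℝ)) {u w : V} (hu : u ∈ L) (hw : w ∈ L) :
    ∃ n : ℤ, B u w + B w u = 2 * (n : ℝ) := by
  obtain ⟨k, hk⟩ := heven (u + w) (L.add_mem hu hw)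
  obtain ⟨m, hm⟩ := heven u hu
  obtain ⟨m', hm'⟩ := heven w hw
  refine ⟨k - m - m', ?_⟩
  simp only [map_add, LinearMap.add_apply] at hk
  push_cast
  linear_combination hk - hm - hm'

def heisenbergSet (L : Submodule ℤ V) : Set (V × V × ℝ) :=
  {p | p.1 ∈ L ∧ p.2.1 ∈ L ∧ ∃ n : ℤ, p.2.2 + B p.1 p.2.1 / 2 = n}

theorem slAct_mem_heisenbergSet {L : Submodule ℤ V}
    (heven : ∀ u ∈ L, ∃ n : ℤ, B u u = 2 * (n : ℝ)) {a b c d : ℤ} (hdet : a * d - b * c = 1)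
    {p : V × V × ℝ} (hp : p ∈ heisenbergSet B L) : slAct a b c d p ∈ heisenbergSet B L := by
  obtain ⟨hx, hy, n, hn⟩ := hp
  refine ⟨L.sub_mem (L.smul_mem _ hx) (L.smul_mem _ hy),
    L.sub_mem (L.smul_mem _ hy) (L.smul_mem _ hx), ?_⟩
  obtain ⟨k, hk⟩ := exists_int_bilin_add_swap B heven hx hy
  obtain ⟨m, hm⟩ := heven p.1 hx
  obtain ⟨m', hm'⟩ := heven p.2.1 hy
  refine ⟨n + b * c * k - d * b * m - c * a * m', ?_⟩
  simp only [slAct, bilin_slAct_fst_snd B hdet]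
  push_cast
  linear_combination hn + (b * c : ℝ) / 2 * hk - (d * b : ℝ) / 2 * hm - (c * a : ℝ) / 2 * hm'

end

theorem slAct_is_action_by_automorphisms_general (V : Type*) [AddCommGroup V] [Module ℝ V]
    (B : V →ₗ[ℝ] V →ₗ[ℝ] ℝ) (hB : ∀ u w : V, B u w = B w u)
    (L : Submodule ℤ V)
    (heven : ∀ u ∈ L, ∃ n : ℤ, B u u = 2 * (n : ℝ)) :
    (∀ p : V × V × ℝ, slAct 1 0 0 1 p = p) ∧
    (∀ a b c d a' b' c' d' : ℤ, a * d - b * c = 1 → a' * d' - b' * c' = 1 →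
      ∀ p : V × V × ℝ,
        slAct (a * a' + b * c') (a * b' + b * d') (c * a' + d * c') (c * b' + d * d') p =
          slAct a b c d (slAct a' b' c' d' p)) ∧
    (∀ a b c d : ℤ, a * d - b * c = 1 → ∀ p q : V × V × ℝ,
      slAct a b c d (heisMul B p q) = heisMul B (slAct a b c d p) (slAct a b c d q)) ∧
    (∀ a b c d : ℤ, a * d - b * c = 1 → ∀ p : V × V × ℝ,
      p.1 ∈ L → p.2.1 ∈ L → (∃ n : ℤ, p.2.2 + B p.1 p.2.1 / 2 = (n : ℝ)) →
        (slAct a b c d p).1 ∈ L ∧ (slAct a b c d p).2.1 ∈ L ∧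
          ∃ n : ℤ, (slAct a b c d p).2.2 + B (slAct a b c d p).1 (slAct a b c d p).2.1 / 2 = (n : ℝ)) :=
  ⟨slAct_one_zero_zero_one,
    fun a b c d a' b' c' d' _ _ p => slAct_mul a b c d a' b' c' d' p,
    fun _ _ _ _ hdet => slAct_heisMul B hB hdet,
    fun _ _ _ _ hdet _ hx hy hr => slAct_mem_heisenbergSet B heven hdet ⟨hx, hy, hr⟩⟩

/-- `A.[x,y:r] := [dx - cy, ay - bx : r]` defines a left action of `SL(2,ℤ)` on the
integral Heisenberg group `H(L)` by group automorphisms: the identity acts trivially,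
the action is compatible with matrix multiplication, each `A` preserves the
Heisenberg multiplication, and the action preserves `H(L)` (membership of the
vector components in `L` and the half-integrality condition `r + ½(x,y) ∈ ℤ`). -/
theorem slAct_is_action_by_automorphisms (V : Type*) [AddCommGroup V] [Module ℝ V]
    (B : V →ₗ[ℝ] V →ₗ[ℝ] ℝ) (hB : ∀ u w : V, B u w = B w u)
    (L : Submodule ℤ V)
    (hint : ∀ u ∈ L, ∀ w ∈ L, ∃ n : ℤ, B u w = (n : ℝ))
    (heven : ∀ u ∈ L, ∃ n : ℤ, B u u = 2 * (n : ℝ)) :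
    (∀ p : V × V × ℝ, slAct 1 0 0 1 p = p) ∧
    (∀ a b c d a' b' c' d' : ℤ, a * d - b * c = 1 → a' * d' - b' * c' = 1 →
      ∀ p : V × V × ℝ,
        slAct (a * a' + b * c') (a * b' + b * d') (c * a' + d * c') (c * b' + d * d') p =
          slAct a b c d (slAct a' b' c' d' p)) ∧
    (∀ a b c d : ℤ, a * d - b * c = 1 → ∀ p q : V × V × ℝ,
      slAct a b c d (heisMul B p q) = heisMul B (slAct a b c d p) (slAct a b c d q)) ∧
    (∀ a b c d : ℤ, a * d - b * c = 1 → ∀ p : V × V × ℝ,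
      p.1 ∈ L → p.2.1 ∈ L → (∃ n : ℤ, p.2.2 + B p.1 p.2.1 / 2 = (n : ℝ)) →
        (slAct a b c d p).1 ∈ L ∧ (slAct a b c d p).2.1 ∈ L ∧
          ∃ n : ℤ, (slAct a b c d p).2.2 + B (slAct a b c d p).1 (slAct a b c d p).2.1 / 2 = (n : ℝ)) :=
  slAct_is_action_by_automorphisms_general V B hB L heven
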